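/- Let f(a,b) = 1 - exp(-(b/γ)(1 - exp(-a/ζ))) with γ, ζ > 0. For all a, b > 0, the second partial derivative f_{aa}(a,b) is strictly negative. -/

import Mathlib

open Real

/-- The paper's `f (·, b)` is `saturation (b / γ) ζ`. -/
noncomputable def saturation (c ζ x : ℝ) : ℝ :=
  1 - exp (-c * (1 - exp (-x / ζ)))

section Saturation

variable (c ζ : ℝ)

theorem hasDerivAt_exp_neg_div (a : ℝ) :
    HasDerivAt (fun x => exp (-x / ζ)) (-exp (-a / ζ) / ζ) a := by
  have h : HasDerivAt (fun x => -x / ζ) (-1 / ζ) a := (hasDerivAt_neg a).div_const ζ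
  convert h.exp using 1
  ring

theorem hasDerivAt_saturation (a : ℝ) :
    HasDerivAt (saturation c ζ) (c / ζ * exp (-a / ζ) * exp (-c * (1 - exp (-a / ζ)))) a := by
  have h : HasDerivAt (saturation c ζ) _ a :=
    (((hasDerivAt_exp_neg_div ζ a).const_sub 1).const_mul (-c)).exp.const_sub 1
  convert h using 1
  field_simp

theorem deriv_saturation :
    deriv (saturation c ζ) = fun x => c / ζ * exp (-x / ζ) * exp (-c * (1 - exp (-x / ζ))) :=
  funext fun a => (hasDerivAt_saturation c ζ a).deriv

theorem deriv_deriv_saturation (a : ℝ) :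
    deriv (deriv (saturation c ζ)) a =
      -(c / ζ ^ 2 * exp (-a / ζ) * exp (-c * (1 - exp (-a / ζ))) * (1 + c * exp (-a / ζ))) := by
  have hexp := hasDerivAt_exp_neg_div ζ a
  have h : HasDerivAt (fun x => c / ζ * exp (-x / ζ) * exp (-c * (1 - exp (-x / ζ)))) _ a :=
    (hexp.const_mul (c / ζ)).mul ((hexp.const_sub 1).const_mul (-c)).exp
  rw [deriv_saturation, h.deriv]
  field_simp
  ring

theorem deriv_deriv_saturation_neg (hc : 0 < c) (hζ : ζ ≠ 0) (a : ℝ) :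
    deriv (deriv (saturation c ζ)) a < 0 := by
  rw [deriv_deriv_saturation, neg_lt_zero]
  positivity

end Saturation

/-- For `f(a,b) = 1 - exp(-(b/γ)(1 - exp(-a/ζ)))` with `γ, ζ > 0` and `a, b > 0`,
the second partial derivative `f_{aa}` is strictly negative. -/
theorem stmt_7 (γ ζ : ℝ) (hγ : 0 < γ) (hζ : 0 < ζ) :
    ∀ a b : ℝ, 0 < a → 0 < b →
      deriv (deriv (fun a' : ℝ => 1 - exp (-(b / γ) * (1 - exp (-a' / ζ))))) a < 0 :=
  fun a b _ hb => deriv_deriv_saturation_neg (b / γ) ζ (div_pos hb hγ) hζ.ne' a
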